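/- arXiv:1905.12627 — 9 statements merged into one kernel-verified Lean document; each statement's English description precedes it below -/
import Mathlib

section
/- If an abelian group G contains distinct elements P0, P1, ..., P_{n-1} forming an alternating n-cycle (n even), i.e., P_i + P_{i+1} = a for even i and = b for odd i (indices mod n), with a ≠ b, then the element b - a satisfies (n/2)·(b - a) = 0, so G has an element of order dividing n/2 other than 0. -/
/-- An alternating n-cycle (n even) in a sum cograph forces n/2-torsion. -/
theorem sum_cograph_alternating_cycle_torsion {G : Type*} [AddCommGroup G]
    (n : ℕ) (hn : Even n) (hn2 : 2 ≤ n) (P : ℕ → G) (a b : G) (hab : a ≠ b)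
    (hdist : ∀ i j, i < n → j < n → i ≠ j → P i ≠ P j)
    (hedge : ∀ i < n, P i + P ((i + 1) % n) = if Even i then a else b) :
    (n / 2) • (b - a) = 0 ∧ b - a ≠ 0 := by
  have key : ∀ k, 2 * k ≤ n → P (2 * k % n) = P 0 + k • (b - a) := by
    intro k
    induction k with
    | zero =>
      intro _
      simp [Nat.mod_eq_of_lt (lt_of_lt_of_le two_pos hn2 : 0 < n)]
    | succ k ih =>
      intro hk
      have h2k : 2 * k < n := by omega
      have h2k1 : 2 * k + 1 < n := by
        rcases Nat.lt_or_ge (2 * k + 1) n with h | h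
        · exact h
        · exfalso
          have : n = 2 * k + 1 := by omega
          rw [this] at hn
          exact (Nat.even_add_one.mp hn) (even_two_mul k)
      have he1 := hedge (2 * k) h2k
      have he2 := hedge (2 * k + 1) h2k1
      rw [if_pos (even_two_mul k)] at he1
      rw [if_neg (by simp [Nat.even_add_one])] at he2
      rw [Nat.mod_eq_of_lt h2k1] at he1
      have hih := ih (by omega)
      rw [Nat.mod_eq_of_lt h2k] at hih
      have heq : 2 * (k + 1) % n = (2 * k + 1 + 1) % n := by ring_nf
      rw [heq]
      have : P ((2 * k + 1 + 1) % n) = b - (a - P (2 * k)) := by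
        rw [← he2, ← he1]; abel
      rw [this, hih, succ_nsmul]
      abel
  constructor
  · obtain ⟨m, hm⟩ := hn
    have h2 : 2 * (n / 2) = n := by omega
    have h := key (n / 2) (by omega)
    rw [h2, Nat.mod_self] at h
    exact (add_eq_left.mp h.symm)
  · exact sub_ne_zero.mpr (Ne.symm hab)
end

section
/- Fibonacci wheel closure forces torsion: let G be an abelian group and a, b ∈ G, n ≥ 3, and define P_0 = a, P_1 = b, P_{i+2} = P_i + P_{i+1}. If P_n = P_0 and P_{n+1} = P_1, then (F_{n-1} - 1)·a + F_n·b = 0 and (F_{n-2} + 1)·a + (F_{n-1} - 1)·b = 0, where F_k are the Fibonacci numbers; consequently t·a = 0 and t·b = 0 where t·d = F_{n-1} + F_{n+1} - 1 - (-1)^n and d = gcd(F_{n-2} + 1, F_{n-1} - 1). -/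
/-!
Writing `Q = !![0, 1; 1, 1]`, the wheel satisfies `(P i, P (i + 1)) = Qⁱ (a, b)`, so closing up
means `(Qⁿ - 1) (a, b) = 0`, and Cramer's rule gives `det (Qⁿ - 1) • a = det (Qⁿ - 1) • b = 0`
with `det (Qⁿ - 1) = 1 - (F_{n-1} + F_{n+1}) + (-1)ⁿ` by Cassini's identity. Subtracting the first
row from the second gives the two stated relations; `d` divides every entry of the resulting
matrix (`F_n = (F_{n-2} + 1) + (F_{n-1} - 1)`), so one factor `d` can be divided out.
-/

theorem wheel_eq_fib {M : Type*} [AddCommMonoid M] {P : ℕ → M}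
    (hrec : ∀ i, P (i + 2) = P i + P (i + 1)) (k : ℕ) :
    P (k + 1) = Nat.fib k • P 0 + Nat.fib (k + 1) • P 1 := by
  induction k using Nat.twoStepInduction with
  | zero => simp
  | one => simp [hrec 0]
  | more k ih₁ ih₂ =>
    rw [hrec (k + 1), ih₁, ih₂, Nat.fib_add_two, Nat.fib_add_two (n := k + 1), Nat.fib_add_two]
    simp only [add_smul]
    abel

theorem wheel_closing_relations {G : Type*} [AddCommGroup G] {P : ℕ → G}
    (hrec : ∀ i, P (i + 2) = P i + P (i + 1)) {m : ℕ}
    (hclose₀ : P (m + 2) = P 0) (hclose₁ : P (m + 3) = P 1) :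
    ((Nat.fib (m + 1) : ℤ) - 1) • P 0 + (Nat.fib (m + 2) : ℤ) • P 1 = 0 ∧
    ((Nat.fib m : ℤ) + 1) • P 0 + ((Nat.fib (m + 1) : ℤ) - 1) • P 1 = 0 := by
  have e₁ := wheel_eq_fib hrec (m + 1)
  have e₂ := wheel_eq_fib hrec (m + 2)
  rw [hclose₀, ← natCast_zsmul, ← natCast_zsmul] at e₁
  rw [hclose₁, ← natCast_zsmul, ← natCast_zsmul] at e₂
  have hF₂ : (Nat.fib (m + 2) : ℤ) = Nat.fib m + Nat.fib (m + 1) := by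
    rw [Nat.fib_add_two]; push_cast; rfl
  have hF₃ : (Nat.fib (m + 1 + 2) : ℤ) = Nat.fib (m + 1) + Nat.fib (m + 2) := by
    rw [Nat.fib_add_two]; push_cast; rfl
  rw [hF₃, hF₂] at e₂
  constructor
  · linear_combination (norm := module) -e₁
  · rw [hF₂] at e₁
    linear_combination (norm := module) e₁ - e₂

theorem fib_sub_one_sq_sub_fib_mul_fib_add_one (m : ℕ) :
    ((Nat.fib (m + 1) : ℤ) - 1) ^ 2 - Nat.fib (m + 2) * (Nat.fib m + 1) =
      (-1) ^ (m + 2) + 1 - (Nat.fib (m + 1) + Nat.fib (m + 3)) := by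
  have cassini : (Nat.fib (m + 2) : ℤ) * Nat.fib m - (Nat.fib (m + 1) : ℤ) ^ 2 = (-1) ^ (m + 1) := by
    have := Int.fib_succ_mul_fib_pred_sub_fib_sq (m + 1 : ℕ)
    rwa [Int.natAbs_natCast, Nat.cast_succ, add_sub_cancel_right, ← Nat.cast_succ, ← Nat.cast_succ,
      Int.fib_natCast, Int.fib_natCast, Int.fib_natCast] at this
  have hF₃ : (Nat.fib (m + 3) : ℤ) = Nat.fib (m + 1) + Nat.fib (m + 2) := by
    rw [Nat.fib_add_two]; push_cast; rfl
  rw [hF₃]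
  linear_combination -cassini

/-- Cramer's rule for `d • N`, whose adjugate `d • adj N` yields `d * det N` rather than
`det (d • N) = d ^ 2 * det N`. -/
theorem mul_det_zsmul_eq_zero {G : Type*} [AddCommGroup G] {a b : G} {d x y z w : ℤ}
    (h₁ : (d * x) • a + (d * y) • b = 0) (h₂ : (d * z) • a + (d * w) • b = 0) :
    (d * (x * w - y * z)) • a = 0 ∧ (d * (x * w - y * z)) • b = 0 :=
  ⟨by linear_combination (norm := module) w • h₁ - y • h₂,
    by linear_combination (norm := module) x • h₂ - z • h₁⟩

theorem zsmul_eq_zero_of_gcd_mul_eq_det {G : Type*} [AddCommGroup G] {a b : G} {x y t : ℤ}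
    (hx : x ≠ 0) (h₁ : y • a + (x + y) • b = 0) (h₂ : x • a + y • b = 0)
    (ht : t * x.gcd y = (x + y) * x - y ^ 2) :
    t • a = 0 ∧ t • b = 0 := by
  set d : ℤ := ((x.gcd y : ℕ) : ℤ)
  have hd : d ≠ 0 := Int.natCast_ne_zero.mpr (Int.gcd_pos_of_ne_zero_left y hx).ne'
  obtain ⟨p, hp⟩ : d ∣ x := Int.gcd_dvd_left _ _
  obtain ⟨q, hq⟩ : d ∣ y := Int.gcd_dvd_right _ _
  clear_value d
  subst hp hq
  have ht' : t = -(d * (q * q - (p + q) * p)) := by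
    apply mul_right_cancel₀ hd
    linear_combination ht
  rw [← mul_add] at h₁
  obtain ⟨ha, hb⟩ := mul_det_zsmul_eq_zero h₁ h₂
  simp only [ht', neg_smul, ha, hb, neg_zero, and_self]

/-- A Fibonacci wheel that closes up forces torsion relations on a and b. -/
theorem fibonacci_wheel_torsion {G : Type*} [AddCommGroup G]
    (a b : G) (n : ℕ) (hn : 3 ≤ n) (P : ℕ → G)
    (h0 : P 0 = a) (h1 : P 1 = b) (hrec : ∀ i, P (i + 2) = P i + P (i + 1))
    (hclose0 : P n = P 0) (hclose1 : P (n + 1) = P 1) :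
    ((Nat.fib (n - 1) : ℤ) - 1) • a + (Nat.fib n : ℤ) • b = 0 ∧
    ((Nat.fib (n - 2) : ℤ) + 1) • a + ((Nat.fib (n - 1) : ℤ) - 1) • b = 0 ∧
    ∀ t : ℤ,
      t * (Int.gcd ((Nat.fib (n - 2) : ℤ) + 1) ((Nat.fib (n - 1) : ℤ) - 1) : ℤ) =
        (Nat.fib (n - 1) : ℤ) + (Nat.fib (n + 1) : ℤ) - 1 - (-1) ^ n →
      t • a = 0 ∧ t • b = 0 := by
  obtain ⟨m, rfl⟩ : ∃ m, n = m + 2 := ⟨n - 2, by omega⟩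
  rw [show m + 2 - 1 = m + 1 by omega, show m + 2 - 2 = m by omega]
  subst h0 h1
  obtain ⟨hR₁, hR₂⟩ := wheel_closing_relations hrec hclose0 hclose1
  refine ⟨hR₁, hR₂, fun t ht => ?_⟩
  have hF : (Nat.fib (m + 2) : ℤ) = (Nat.fib m + 1) + (Nat.fib (m + 1) - 1) := by
    rw [Nat.fib_add_two]; push_cast; ring
  rw [hF] at hR₁
  refine zsmul_eq_zero_of_gcd_mul_eq_det (by positivity) hR₁ hR₂ ?_
  rw [ht, ← hF]
  linear_combination fib_sub_one_sq_sub_fib_mul_fib_add_one m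
end

section
/- Index-shifting gcd identity for Fibonacci numbers: gcd(F_{i-1} + F_{j+1}, F_i - F_j) = gcd(F_{i-3} + F_{j+3}, F_{i-2} - F_{j+2}) for appropriate indices i ≥ 3, j ≥ 0 with F_i ≥ F_j. -/
theorem Int.gcd_add_add_two_mul (a b : ℤ) : Int.gcd (a + b) (a + 2 * b) = Int.gcd a b := by
  rw [show a + 2 * b = a + b + b by ring, Int.gcd_self_add_right, Int.gcd_add_self_left]

theorem fib_gcd_index_shift_general (i j : ℕ) (hi : 3 ≤ i) :
    Int.gcd ((Nat.fib (i - 1) : ℤ) + (Nat.fib (j + 1) : ℤ))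
        ((Nat.fib i : ℤ) - (Nat.fib j : ℤ)) =
      Int.gcd ((Nat.fib (i - 3) : ℤ) + (Nat.fib (j + 3) : ℤ))
        ((Nat.fib (i - 2) : ℤ) - (Nat.fib (j + 2) : ℤ)) := by
  obtain ⟨k, rfl⟩ : ∃ k, i = k + 3 := ⟨i - 3, by omega⟩
  show Int.gcd (Nat.fib (k + 2) + Nat.fib (j + 1)) (Nat.fib (k + 3) - Nat.fib j) =
    Int.gcd (Nat.fib k + Nat.fib (j + 3)) (Nat.fib (k + 1) - Nat.fib (j + 2))
  -- With `a = F_{i-3} + F_{j+3}` and `b = F_{i-2} - F_{j+2}` the recurrence gives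
  -- `a + b = F_{i-1} + F_{j+1}` and `a + 2 b = F_i - F_j`.
  refine .trans ?_ (Int.gcd_add_add_two_mul _ _)
  congr 1 <;> push_cast [Nat.fib_add_two] <;> ring

/-- Index-shifting gcd identity for Fibonacci numbers. -/
theorem fib_gcd_index_shift (i j : ℕ) (hi : 3 ≤ i) (hij : Nat.fib j ≤ Nat.fib i) :
    Int.gcd ((Nat.fib (i - 1) : ℤ) + (Nat.fib (j + 1) : ℤ))
        ((Nat.fib i : ℤ) - (Nat.fib j : ℤ)) =
      Int.gcd ((Nat.fib (i - 3) : ℤ) + (Nat.fib (j + 3) : ℤ))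
        ((Nat.fib (i - 2) : ℤ) - (Nat.fib (j + 2) : ℤ)) :=
  fib_gcd_index_shift_general i j hi
end

section
/- For n ≡ 2 (mod 4), gcd(F_{n-2} + 1, F_{n-1} - 1) = L_{n/2}, the Lucas number, where L_1 = 1, L_2 = 3, L_{k+2} = L_k + L_{k+1}. -/
/-- Lucas numbers: L 0 = 2, L 1 = 1, L 2 = 3, L (k+2) = L k + L (k+1). -/
def lucas : ℕ → ℕ
  | 0 => 2
  | 1 => 1
  | k + 2 => lucas k + lucas (k + 1)

lemma lucas_eq_fib : ∀ m, lucas (m + 1) = Nat.fib m + Nat.fib (m + 2)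
  | 0 => rfl
  | 1 => rfl
  | (m + 2) => by
    show lucas (m + 1) + lucas (m + 2) = _
    rw [lucas_eq_fib m, lucas_eq_fib (m + 1)]
    rw [Nat.fib_add_two (n := m + 2), Nat.fib_add_two (n := m + 1),
      Nat.fib_add_two (n := m)]
    ring

lemma cassini : ∀ n : ℕ, (Nat.fib (n + 1) : ℤ) ^ 2 - Nat.fib n * Nat.fib (n + 2) = (-1) ^ n
  | 0 => by simp
  | (n + 1) => by
    have ih := cassini n
    have h1 : (Nat.fib (n + 2) : ℤ) = Nat.fib n + Nat.fib (n + 1) := by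
      exact_mod_cast congrArg (Nat.cast : ℕ → ℤ) (Nat.fib_add_two (n := n))
    have h2 : (Nat.fib (n + 3) : ℤ) = Nat.fib (n + 1) + Nat.fib (n + 2) := by
      exact_mod_cast congrArg (Nat.cast : ℕ → ℤ) (Nat.fib_add_two (n := n + 1))
    show (Nat.fib (n + 2) : ℤ) ^ 2 - Nat.fib (n + 1) * Nat.fib (n + 3) = (-1) ^ (n + 1)
    rw [pow_succ]
    linear_combination -ih - (Nat.fib (n + 1) : ℤ) * h2 + (Nat.fib (n + 2) : ℤ) * h1

/-- Cassini at even index, in ℕ. -/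
lemma cassini_even (j : ℕ) :
    Nat.fib (2 * j + 3) ^ 2 = Nat.fib (2 * j + 2) * Nat.fib (2 * j + 4) + 1 := by
  have h : (Nat.fib (2 * j + 3) : ℤ) ^ 2 - Nat.fib (2 * j + 2) * Nat.fib (2 * j + 4)
      = (-1) ^ (2 * j + 2) := cassini (2 * j + 2)
  rw [show (-1 : ℤ) ^ (2 * j + 2) = 1 by rw [pow_add]; simp [pow_mul]] at h
  have : (Nat.fib (2 * j + 3) : ℤ) ^ 2 = Nat.fib (2 * j + 2) * Nat.fib (2 * j + 4) + 1 := by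
    linear_combination h
  exact_mod_cast this

lemma catalan_odd (j : ℕ) :
    Nat.fib (2 * j + 1) * Nat.fib (2 * j + 4) = Nat.fib (2 * j + 2) * Nat.fib (2 * j + 3) + 1 := by
  have h : (Nat.fib (2 * j + 2) : ℤ) ^ 2 - Nat.fib (2 * j + 1) * Nat.fib (2 * j + 3)
      = (-1) ^ (2 * j + 1) := cassini (2 * j + 1)
  rw [show (-1 : ℤ) ^ (2 * j + 1) = -1 by rw [pow_add]; simp [pow_mul]] at h
  have h1 : (Nat.fib (2 * j + 3) : ℤ) = Nat.fib (2 * j + 1) + Nat.fib (2 * j + 2) := by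
    exact_mod_cast congrArg (Nat.cast : ℕ → ℤ) (Nat.fib_add_two (n := 2 * j + 1))
  have h2 : (Nat.fib (2 * j + 4) : ℤ) = Nat.fib (2 * j + 2) + Nat.fib (2 * j + 3) := by
    exact_mod_cast congrArg (Nat.cast : ℕ → ℤ) (Nat.fib_add_two (n := 2 * j + 2))
  have : (Nat.fib (2 * j + 1) : ℤ) * Nat.fib (2 * j + 4)
      = Nat.fib (2 * j + 2) * Nat.fib (2 * j + 3) + 1 := by
    linear_combination (Nat.fib (2 * j + 1) : ℤ) * h2 - h - (Nat.fib (2 * j + 2) : ℤ) * h1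
  exact_mod_cast this

lemma fact1 (j : ℕ) :
    Nat.fib (4 * j + 4) + 1 = Nat.fib (2 * j + 1) * lucas (2 * j + 3) := by
  have hadd : Nat.fib (4 * j + 4)
      = Nat.fib (2 * j + 1) * Nat.fib (2 * j + 2) + Nat.fib (2 * j + 2) * Nat.fib (2 * j + 3) := by
    have := Nat.fib_add (2 * j + 1) (2 * j + 2)
    rw [show 2 * j + 1 + (2 * j + 2) + 1 = 4 * j + 4 by ring] at this
    convert this using 3
  rw [hadd, lucas_eq_fib, show 2 * j + 2 + 2 = 2 * j + 4 by ring, Nat.mul_add]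
  linarith [catalan_odd j]

lemma fact2 (j : ℕ) :
    Nat.fib (4 * j + 5) - 1 = Nat.fib (2 * j + 2) * lucas (2 * j + 3) := by
  have hadd : Nat.fib (4 * j + 5)
      = Nat.fib (2 * j + 2) * Nat.fib (2 * j + 2) + Nat.fib (2 * j + 3) * Nat.fib (2 * j + 3) := by
    have := Nat.fib_add (2 * j + 2) (2 * j + 2)
    rw [show 2 * j + 2 + (2 * j + 2) + 1 = 4 * j + 5 by ring] at this
    convert this using 3
  have : Nat.fib (4 * j + 5) = Nat.fib (2 * j + 2) * lucas (2 * j + 3) + 1 := by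
    rw [hadd, lucas_eq_fib, show 2 * j + 2 + 2 = 2 * j + 4 by ring, Nat.mul_add]
    nlinarith [cassini_even j]
  omega

/-- For n ≡ 2 (mod 4), gcd(F_{n-2} + 1, F_{n-1} - 1) = L_{n/2}. -/
theorem fib_gcd_eq_lucas (n : ℕ) (hn : n % 4 = 2) (hn6 : 6 ≤ n) :
    Nat.gcd (Nat.fib (n - 2) + 1) (Nat.fib (n - 1) - 1) = lucas (n / 2) := by
  obtain ⟨j, rfl⟩ : ∃ j, n = 4 * j + 6 := ⟨(n - 6) / 4, by omega⟩
  rw [show 4 * j + 6 - 2 = 4 * j + 4 by omega, show 4 * j + 6 - 1 = 4 * j + 5 by omega,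
    show (4 * j + 6) / 2 = 2 * j + 3 by omega]
  rw [fact1 j, fact2 j, Nat.gcd_mul_right]
  have hc : Nat.gcd (Nat.fib (2 * j + 1)) (Nat.fib (2 * j + 2)) = 1 :=
    Nat.fib_coprime_fib_succ (2 * j + 1)
  rw [hc, one_mul]
end

section
/- For n ≡ 0 (mod 4), gcd(F_{n-2} + 1, F_{n-1} - 1) = F_{n/2}. -/
/-- Lucas numbers. -/
def luc : ℕ → ℕ
  | 0 => 2
  | 1 => 1
  | n + 2 => luc n + luc (n + 1)

lemma luc_coprime (n : ℕ) : Nat.gcd (luc n) (luc (n + 1)) = 1 := by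
  induction n with
  | zero => decide
  | succ n ih =>
    rw [show luc (n + 2) = luc n + luc (n + 1) from rfl,
      Nat.gcd_add_self_right, Nat.gcd_comm]
    exact ih

lemma key (k : ℕ) :
    Nat.fib (4*k+2) + 1 = Nat.fib (2*k+2) * luc (2*k) ∧
    Nat.fib (4*k+3) = Nat.fib (2*k+2) * luc (2*k+1) + 1 ∧
    Nat.fib (2*k+1) * luc (2*k) = Nat.fib (2*k) * luc (2*k+1) + 2 ∧
    Nat.fib (2*k+1) * luc (2*k+1)
      = Nat.fib (2*k) * luc (2*k) + Nat.fib (2*k) * luc (2*k+1) + 1 := by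
  induction k with
  | zero => decide
  | succ k ih =>
    obtain ⟨hP, hQ, hR, hS⟩ := ih
    have e2 : Nat.fib (4*k+4) = Nat.fib (4*k+2) + Nat.fib (4*k+3) :=
      Nat.fib_add_two
    have e3 : Nat.fib (4*k+5) = Nat.fib (4*k+3) + Nat.fib (4*k+4) :=
      Nat.fib_add_two
    have e4 : Nat.fib (4*k+6) = Nat.fib (4*k+4) + Nat.fib (4*k+5) :=
      Nat.fib_add_two
    have e5 : Nat.fib (4*k+7) = Nat.fib (4*k+5) + Nat.fib (4*k+6) :=
      Nat.fib_add_two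
    have g1 : Nat.fib (2*k+2) = Nat.fib (2*k) + Nat.fib (2*k+1) :=
      Nat.fib_add_two
    have g2 : Nat.fib (2*k+3) = Nat.fib (2*k+1) + Nat.fib (2*k+2) :=
      Nat.fib_add_two
    have g3 : Nat.fib (2*k+4) = Nat.fib (2*k+2) + Nat.fib (2*k+3) :=
      Nat.fib_add_two
    have l1 : luc (2*k+2) = luc (2*k) + luc (2*k+1) := rfl
    have l2 : luc (2*k+3) = luc (2*k+1) + luc (2*k+2) := rfl
    refine ⟨?_, ?_, ?_, ?_⟩
    · show Nat.fib (4*k+6) + 1 = Nat.fib (2*k+4) * luc (2*k+2)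
      rw [e4, e3, e2, g3, g2, g1, l1]
      rw [g1] at hP hQ
      zify at hP hQ hR ⊢
      linear_combination 2*hP + 3*hQ - hR
    · show Nat.fib (4*k+7) = Nat.fib (2*k+4) * luc (2*k+3) + 1
      rw [e5, e4, e3, e2, g3, g2, g1, l2, l1]
      rw [g1] at hP hQ
      zify at hP hQ hS ⊢
      linear_combination 3*hP + 5*hQ - hS
    · show Nat.fib (2*k+3) * luc (2*k+2) = Nat.fib (2*k+2) * luc (2*k+3) + 2
      rw [g2, g1, l2, l1]
      zify at hR ⊢
      linear_combination hR
    · show Nat.fib (2*k+3) * luc (2*k+3)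
        = Nat.fib (2*k+2) * luc (2*k+2) + Nat.fib (2*k+2) * luc (2*k+3) + 1
      rw [g2, g1, l2, l1]
      zify at hS ⊢
      linear_combination hS

/-- For n ≡ 0 (mod 4), gcd(F_{n-2} + 1, F_{n-1} - 1) = F_{n/2}. -/
theorem fib_gcd_eq_fib (n : ℕ) (hn : n % 4 = 0) (hn4 : 4 ≤ n) :
    Nat.gcd (Nat.fib (n - 2) + 1) (Nat.fib (n - 1) - 1) = Nat.fib (n / 2) := by
  obtain ⟨k, rfl⟩ : ∃ k, n = 4*k + 4 := ⟨n / 4 - 1, by omega⟩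
  rw [show 4*k + 4 - 2 = 4*k + 2 by omega, show 4*k + 4 - 1 = 4*k + 3 by omega,
    show (4*k + 4) / 2 = 2*k + 2 by omega]
  obtain ⟨hP, hQ, -, -⟩ := key k
  rw [hP, hQ, Nat.add_sub_cancel, Nat.gcd_mul_left, luc_coprime, mul_one]
end

section
/- UIE construction: let C be a cograph with point set I and edge labels C(P,Q) which are sets, such that every triangle satisfies C(P,Q) ∩ C(Q,R) = C(P,R) ∩ C(Q,R) = C(P,Q) ∩ C(P,R) and every quadrilateral satisfies C(P,Q) ∩ C(R,S) = C(P,R) ∩ C(Q,S) = C(P,S) ∩ C(Q,R). Define P' = {P₀} ∪ ⋃_{Q ≠ P} C(P,Q), where the P₀ are distinct fresh labels. Then for all distinct P, S: P' ∩ S' = C(P,S) (up to the fresh labels, which appear in no intersection). -/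
/-- UIE ("union of incident edges") construction: the constructed points have
intersections exactly the prescribed edges. -/
theorem uie_construction {ι α : Type*} (C : ι → ι → Set α) (p0 : ι → α)
    (hsymm : ∀ P Q, C P Q = C Q P)
    (htri : ∀ P Q R : ι, P ≠ Q → Q ≠ R → P ≠ R →
      C P Q ∩ C Q R = C P R ∩ C Q R ∧ C P Q ∩ C Q R = C P Q ∩ C P R)
    (hquad : ∀ P Q R S : ι, P ≠ Q → P ≠ R → P ≠ S → Q ≠ R → Q ≠ S → R ≠ S →
      C P Q ∩ C R S = C P R ∩ C Q S ∧ C P Q ∩ C R S = C P S ∩ C Q R)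
    (hfresh_inj : Function.Injective p0)
    (hfresh : ∀ P Q R : ι, p0 P ∉ C Q R) :
    ∀ P S : ι, P ≠ S →
      ({p0 P} ∪ ⋃ Q ∈ {Q : ι | Q ≠ P}, C P Q) ∩
        ({p0 S} ∪ ⋃ R ∈ {R : ι | R ≠ S}, C S R) = C P S := by
  intro P S hPS
  ext x
  simp only [Set.mem_inter_iff, Set.mem_union, Set.mem_singleton_iff,
    Set.mem_iUnion, Set.mem_setOf_eq, exists_prop]
  constructor
  · rintro ⟨(hxP | ⟨Q, hQP, hxQ⟩), hS⟩
    · rcases hS with h | ⟨R, hRS, hxR⟩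
      · exact absurd (hfresh_inj (hxP ▸ h : p0 P = p0 S)) hPS
      · exact absurd (hxP ▸ hxR) (hfresh P S R)
    · rcases hS with h | ⟨R, hRS, hxR⟩
      · exact absurd (h ▸ hxQ) (hfresh S P Q)
      · -- x ∈ C P Q ∩ C S R, Q ≠ P, R ≠ S
        by_cases hQS : Q = S
        · subst hQS; exact hxQ
        by_cases hRP : R = P
        · rw [hRP] at hxR; exact hsymm S P ▸ hxR
        by_cases hQR : Q = R
        · subst hQR
          -- triangle P, Q, S: x ∈ C P Q ∩ C S Q
          have := (htri P Q S (Ne.symm hQP) hQS hPS).1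
          have hx : x ∈ C P Q ∩ C Q S := ⟨hxQ, hsymm S Q ▸ hxR⟩
          exact (this ▸ hx).1
        · -- quad P Q S R all distinct
          have := (hquad P Q S R (Ne.symm hQP) hPS (Ne.symm hRP) hQS
            hQR (Ne.symm hRS)).1
          have hx : x ∈ C P Q ∩ C S R := ⟨hxQ, hxR⟩
          exact (this ▸ hx).1
  · intro hx
    exact ⟨Or.inr ⟨S, Ne.symm hPS, hx⟩, Or.inr ⟨P, hPS, hsymm P S ▸ hx⟩⟩
end

section
/- In a PL-cograph with more than one edge label, for any two points P and Q there exists a point R such that C(P,Q), C(P,R), C(Q,R) are pairwise distinct. -/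
/-- In a PL-cograph with more than one edge label, any two points lie in a triangle
with three pairwise distinct edges. -/
theorem pl_cograph_triangle {ι E : Type*} (C : ι → ι → E)
    (hsymm : ∀ P Q, C P Q = C Q P)
    (rule1 : ∀ P Q R : ι, P ≠ Q → Q ≠ R → P ≠ R → C P Q = C Q R → C P Q = C P R)
    (rule2 : ∀ P Q R S : ι, P ≠ Q → P ≠ R → P ≠ S → Q ≠ R → Q ≠ S → R ≠ S →
      C P Q = C R S →
      C P Q = C P R ∧ C P Q = C P S ∧ C P Q = C Q R ∧ C P Q = C Q S)
    (hmulti : ∃ P Q R S : ι, P ≠ Q ∧ R ≠ S ∧ C P Q ≠ C R S) :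
    ∀ P Q : ι, P ≠ Q → ∃ R : ι, R ≠ P ∧ R ≠ Q ∧
      C P Q ≠ C P R ∧ C P Q ≠ C Q R ∧ C P R ≠ C Q R := by
  classical
  -- key: if X is a point with C P X ≠ C P Q, then the triangle P Q X is rainbow
  have key : ∀ P Q X : ι, P ≠ Q → X ≠ P → X ≠ Q → C P X ≠ C P Q →
      C P Q ≠ C P X ∧ C P Q ≠ C Q X ∧ C P X ≠ C Q X := by
    intro P Q X hPQ hXP hXQ hne
    refine ⟨fun h => hne h.symm, ?_, ?_⟩
    · intro h
      exact hne (rule1 P Q X hPQ (Ne.symm hXQ) (Ne.symm hXP) h).symm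
    · intro h
      exact hne (rule1 P X Q (Ne.symm hXP) hXQ hPQ (h.trans (hsymm Q X)))
  intro P Q hPQ
  -- from any edge labeled differently, extract X adjacent to P or Q with a new label
  have find : ∀ A B : ι, A ≠ B → C A B ≠ C P Q →
      ∃ X, X ≠ P ∧ X ≠ Q ∧ (C P X ≠ C P Q ∨ C Q X ≠ C Q P) := by
    intro A B hAB hne
    by_cases hAP : A = P
    · have hBP : B ≠ P := fun h => hAB (hAP.trans h.symm)
      by_cases hBQ : B = Q
      · exact absurd (by rw [hAP, hBQ]) hne
      · exact ⟨B, hBP, hBQ, Or.inl (by rw [hAP] at hne; exact hne)⟩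
    by_cases hAQ : A = Q
    · have hBQ : B ≠ Q := fun h => hAB (hAQ.trans h.symm)
      by_cases hBP : B = P
      · exact absurd (by rw [hAQ, hBP, hsymm]) hne
      · exact ⟨B, hBP, hBQ, Or.inr (by rw [hAQ] at hne; intro h; exact hne (h.trans (hsymm Q P)))⟩
    by_cases hBP : B = P
    · exact ⟨A, hAP, hAQ, Or.inl (by rw [hBP] at hne; intro h; exact hne ((hsymm A P).trans h))⟩
    by_cases hBQ : B = Q
    · exact ⟨A, hAP, hAQ, Or.inr (by rw [hBQ] at hne; intro h; exact hne (((hsymm A Q).trans h).trans (hsymm Q P)))⟩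
    -- disjoint case
    by_cases h1 : C P A = C P Q
    · by_cases h2 : C P B = C P Q
      · exfalso
        have h3 : C A P = C P B := (hsymm A P).trans (h1.trans h2.symm)
        have h4 : C A P = C A B := rule1 A P B hAP (Ne.symm hBP) hAB h3
        exact hne (h4.symm.trans ((hsymm A P).trans h1))
      · exact ⟨B, hBP, hBQ, Or.inl h2⟩
    · exact ⟨A, hAP, hAQ, Or.inl h1⟩
  obtain ⟨A, B, S, T, hAB, hST, hmul⟩ := hmulti
  have hedge : ∃ A B : ι, A ≠ B ∧ C A B ≠ C P Q := by
    by_cases h : C A B = C P Q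
    · exact ⟨S, T, hST, fun hh => hmul (h.trans hh.symm)⟩
    · exact ⟨A, B, hAB, h⟩
  obtain ⟨A', B', hAB', hne'⟩ := hedge
  obtain ⟨X, hXP, hXQ, hcase⟩ := find A' B' hAB' hne'
  rcases hcase with h | h
  · obtain ⟨h1, h2, h3⟩ := key P Q X hPQ hXP hXQ h
    exact ⟨X, hXP, hXQ, h1, h2, h3⟩
  · obtain ⟨h1, h2, h3⟩ := key Q P X (Ne.symm hPQ) hXQ hXP h
    refine ⟨X, hXP, hXQ, ?_, ?_, ?_⟩
    · exact fun hh => h2 ((hsymm P Q).symm.trans hh)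
    · exact fun hh => h1 ((hsymm P Q).symm.trans hh)
    · exact fun hh => h3 hh.symm
end

section
/- Edge-coordinatization of PL-cographs: let C be a PL-cograph with more than one edge value, X, Y points with distinct edges e = C(X,Y), and O a point with C(O,X) = f, C(O,Y) = g, and e, f, g pairwise distinct. Then the map sending each point P ∉ {X,Y} to the pair (C(P,X), C(P,Y)) if C(P,X) ≠ C(P,Y), and to C(P,O) if C(P,X) = C(P,Y), is injective on points outside {X,Y}. -/
/-- Edge-coordinatization of PL-cographs: the coordinate labels determine each point
outside {X, Y} uniquely. -/
theorem pl_cograph_edge_coordinatization {ι E : Type*} (C : ι → ι → E)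
    (hsymm : ∀ P Q, C P Q = C Q P)
    (rule1 : ∀ P Q R : ι, P ≠ Q → Q ≠ R → P ≠ R → C P Q = C Q R → C P Q = C P R)
    (rule2 : ∀ P Q R S : ι, P ≠ Q → P ≠ R → P ≠ S → Q ≠ R → Q ≠ S → R ≠ S →
      C P Q = C R S →
      C P Q = C P R ∧ C P Q = C P S ∧ C P Q = C Q R ∧ C P Q = C Q S)
    (X Y O : ι) (hXY : X ≠ Y) (hOX : O ≠ X) (hOY : O ≠ Y)
    (hef : C X Y ≠ C O X) (heg : C X Y ≠ C O Y) (hfg : C O X ≠ C O Y) :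
    ∀ P Q : ι, P ≠ X → P ≠ Y → Q ≠ X → Q ≠ Y →
      ((C P X ≠ C P Y ∧ C Q X ≠ C Q Y ∧ C P X = C Q X ∧ C P Y = C Q Y) ∨
       (C P X = C P Y ∧ C Q X = C Q Y ∧ C P O = C Q O)) →
      P = Q := by
  intro P Q hPX hPY hQX hQY h
  by_contra hne
  rcases h with ⟨hPne, hQne, hX, hY⟩ | ⟨hPeq, hQeq, hO⟩
  · -- first case: C P X = C P Q and C P Y = C P Q give contradiction
    have h1 : C P X = C P Q :=
      rule1 P X Q hPX (Ne.symm hQX) hne (by rw [hsymm X Q]; exact hX)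
    have h2 : C P Y = C P Q :=
      rule1 P Y Q hPY (Ne.symm hQY) hne (by rw [hsymm Y Q]; exact hY)
    exact hPne (h1.trans h2.symm)
  · -- second case
    have hPO : P ≠ O := by
      intro h; apply hfg; rw [← h]; exact hPeq
    have hQO : Q ≠ O := by
      intro h; apply hfg; rw [← h]; exact hQeq
    have eP : C P X = C X Y := by
      have := rule1 X P Y (Ne.symm hPX) hPY hXY (by rw [hsymm X P]; exact hPeq)
      rw [hsymm P X]; exact this
    have eQ : C Q X = C X Y := by
      have := rule1 X Q Y (Ne.symm hQX) hQY hXY (by rw [hsymm X Q]; exact hQeq)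
      rw [hsymm Q X]; exact this
    have hPXQY : C P X = C Q Y := eP.trans (eQ.symm.trans hQeq)
    obtain ⟨h1, _, _, _⟩ := rule2 P X Q Y hPX hne hPY (Ne.symm hQX) hXY hQY hPXQY
    -- h1 : C P X = C P Q
    have h2 : C P O = C P Q :=
      rule1 P O Q hPO (Ne.symm hQO) hne (by rw [hsymm O Q]; exact hO)
    have h3 : C O P = C P X := by rw [hsymm O P, h2, h1]
    have h4 : C O P = C O X := rule1 O P X (Ne.symm hPO) hPX hOX h3
    exact hef (eP.symm.trans (h3.symm.trans h4))
end

section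
/- Chain characterization in group cographs: let G be a group and P, Q ∈ G with PQ ≠ QP, PQ² = Q²P, and P²Q = QP². Define A = PQ and the sequence P_{2k} = A^{-k} P A^k, P_{2k+1} = A^{-k} Q A^k. Then for every i, {P_i P_{i+1}, P_{i+1} P_i} = {PQ, QP}, consecutive terms are distinct, P_i ≠ P_{i+2}, and P_i² = P² for even i, P_i² = Q² for odd i. Moreover, in the group generated by such P, Q with P of finite order p, p must be even. -/
/-- The chain determined by a pair P, Q in a group cograph:
P_{2k} = A⁻ᵏ P Aᵏ and P_{2k+1} = A⁻ᵏ Q Aᵏ where A = PQ. -/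
def chainSeq {G : Type*} [Group G] (P Q : G) (i : ℕ) : G :=
  ((P * Q)⁻¹) ^ (i / 2) * (if i % 2 = 0 then P else Q) * (P * Q) ^ (i / 2)

private lemma chain_even {G : Type*} [Group G] (P Q : G) (k : ℕ) :
    chainSeq P Q (2 * k) = ((P * Q)⁻¹) ^ k * P * (P * Q) ^ k := by
  have hd : (2 * k) / 2 = k := by omega
  have hm : (2 * k) % 2 = 0 := by omega
  rw [chainSeq, hd, hm, if_pos rfl]

private lemma chain_odd {G : Type*} [Group G] (P Q : G) (k : ℕ) :
    chainSeq P Q (2 * k + 1) = ((P * Q)⁻¹) ^ k * Q * (P * Q) ^ k := by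
  have hd : (2 * k + 1) / 2 = k := by omega
  have hm : (2 * k + 1) % 2 = 1 := by omega
  rw [chainSeq, hd, hm]
  norm_num

private lemma conj_pow_eq {G : Type*} [Group G] {A x : G} (h : Commute x A) (k : ℕ) :
    (A⁻¹) ^ k * x * A ^ k = x := by
  rw [inv_pow, mul_assoc, (h.pow_right k).eq, ← mul_assoc, inv_mul_cancel, one_mul]

private lemma cancel_mid {G : Type*} [Group G] {a b x y : G}
    (h : a * x * b = a * y * b) : x = y :=
  mul_left_cancel (mul_right_cancel h)

/-- Chain characterization in group cographs. -/
theorem group_cograph_chain {G : Type*} [Group G] (P Q : G)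
    (h1 : P * Q ≠ Q * P) (h2 : P * Q ^ 2 = Q ^ 2 * P) (h3 : P ^ 2 * Q = Q * P ^ 2) :
    (∀ i : ℕ,
      ({ chainSeq P Q i * chainSeq P Q (i + 1),
         chainSeq P Q (i + 1) * chainSeq P Q i } : Set G) = {P * Q, Q * P} ∧
      chainSeq P Q i ≠ chainSeq P Q (i + 1) ∧
      chainSeq P Q i ≠ chainSeq P Q (i + 2) ∧
      (Even i → (chainSeq P Q i) ^ 2 = P ^ 2) ∧
      (Odd i → (chainSeq P Q i) ^ 2 = Q ^ 2)) ∧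
    (∀ p : ℕ, 0 < p → P ^ p = 1 → Even p) := by
  -- basic commutations
  have cP2 : Commute (P ^ 2) (P * Q) := by
    show P ^ 2 * (P * Q) = (P * Q) * P ^ 2
    calc P ^ 2 * (P * Q) = P * (P ^ 2 * Q) := by
          simp only [pow_two, mul_assoc]
      _ = P * (Q * P ^ 2) := by rw [h3]
      _ = (P * Q) * P ^ 2 := by rw [← mul_assoc]
  have cQ2 : Commute (Q ^ 2) (P * Q) := by
    show Q ^ 2 * (P * Q) = (P * Q) * Q ^ 2
    calc Q ^ 2 * (P * Q) = (Q ^ 2 * P) * Q := by rw [mul_assoc]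
      _ = (P * Q ^ 2) * Q := by rw [h2]
      _ = (P * Q) * Q ^ 2 := by simp only [pow_two, mul_assoc]
  have cQP : Commute (Q * P) (P * Q) := by
    show (Q * P) * (P * Q) = (P * Q) * (Q * P)
    calc (Q * P) * (P * Q) = Q * (P ^ 2 * Q) := by
          simp only [pow_two, mul_assoc]
      _ = Q * (Q * P ^ 2) := by rw [h3]
      _ = (Q ^ 2 * P) * P := by simp only [pow_two, mul_assoc]
      _ = (P * Q ^ 2) * P := by rw [h2]
      _ = (P * Q) * (Q * P) := by simp only [pow_two, mul_assoc]
  have hPAQ : P * (P * Q) * Q = (P * Q) * (Q * P) := by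
    calc P * (P * Q) * Q = (P ^ 2 * Q) * Q := by simp only [pow_two, mul_assoc]
      _ = (Q * P ^ 2) * Q := by rw [h3]
      _ = Q * (P ^ 2 * Q) := by rw [mul_assoc]
      _ = Q * (Q * P ^ 2) := by rw [h3]
      _ = (Q ^ 2 * P) * P := by simp only [pow_two, mul_assoc]
      _ = (P * Q ^ 2) * P := by rw [h2]
      _ = (P * Q) * (Q * P) := by simp only [pow_two, mul_assoc]
  have hPQ : P ≠ Q := fun h => h1 (by rw [h])
  constructor
  · intro i
    rcases Nat.even_or_odd i with ⟨k, hk⟩ | ⟨k, hk⟩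
    · -- i = 2k
      have hi : i = 2 * k := by omega
      subst hi
      have e0 := chain_even P Q k
      have e1 := chain_odd P Q k
      have e2 : chainSeq P Q (2 * k + 2)
          = ((P * Q)⁻¹) ^ (k + 1) * P * (P * Q) ^ (k + 1) := by
        have h : 2 * k + 2 = 2 * (k + 1) := by ring
        rw [h, chain_even]
      have prod1 : chainSeq P Q (2 * k) * chainSeq P Q (2 * k + 1) = P * Q := by
        rw [e0, e1]
        have h : ((P*Q)⁻¹) ^ k * P * (P*Q) ^ k * (((P*Q)⁻¹) ^ k * Q * (P*Q) ^ k)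
            = ((P*Q)⁻¹) ^ k * (P * Q) * (P*Q) ^ k := by simp only [inv_pow, pow_succ]; group
        rw [h, conj_pow_eq (Commute.refl (P*Q)) k]
      have prod2 : chainSeq P Q (2 * k + 1) * chainSeq P Q (2 * k) = Q * P := by
        rw [e0, e1]
        have h : ((P*Q)⁻¹) ^ k * Q * (P*Q) ^ k * (((P*Q)⁻¹) ^ k * P * (P*Q) ^ k)
            = ((P*Q)⁻¹) ^ k * (Q * P) * (P*Q) ^ k := by simp only [inv_pow, pow_succ]; group
        rw [h, conj_pow_eq cQP k]
      refine ⟨by rw [prod1, prod2], ?_, ?_, ?_, ?_⟩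
      · intro h
        rw [e0, e1] at h
        exact hPQ (cancel_mid h)
      · intro h
        rw [e0, e2] at h
        have key : ((P*Q)⁻¹) ^ (k+1) * P * (P*Q) ^ (k+1)
            = ((P*Q)⁻¹) ^ k * ((P*Q)⁻¹ * P * (P*Q)) * (P*Q) ^ k := by
          simp only [pow_succ ((P*Q)⁻¹) k, pow_succ' (P*Q) k, mul_assoc]
        have h' : P = (P*Q)⁻¹ * P * (P*Q) := cancel_mid (h.trans key)
        have h'' : (P*Q) * P = P * (P*Q) := by
          calc (P*Q) * P = (P*Q) * ((P*Q)⁻¹ * P * (P*Q)) := by rw [← h']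
            _ = P * (P*Q) := by group
        have h3' : P * (Q * P) = P * (P * Q) := by
          rw [← mul_assoc]; exact h''
        exact h1 (mul_left_cancel h3').symm
      · intro _
        rw [e0]
        have h : (((P*Q)⁻¹) ^ k * P * (P*Q) ^ k) ^ 2
            = ((P*Q)⁻¹) ^ k * P ^ 2 * (P*Q) ^ k := by simp only [inv_pow, pow_two]; group
        rw [h, conj_pow_eq cP2 k]
      · intro hodd
        exact absurd hodd (by simp [Nat.odd_iff])
    · -- i = 2k + 1
      have hi : i = 2 * k + 1 := by omega
      subst hi
      have e1 := chain_odd P Q k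
      have e2 : chainSeq P Q (2 * k + 1 + 1)
          = ((P * Q)⁻¹) ^ (k + 1) * P * (P * Q) ^ (k + 1) := by
        have h : 2 * k + 1 + 1 = 2 * (k + 1) := by ring
        rw [h, chain_even]
      have e3 : chainSeq P Q (2 * k + 1 + 2)
          = ((P * Q)⁻¹) ^ (k + 1) * Q * (P * Q) ^ (k + 1) := by
        have h : 2 * k + 1 + 2 = 2 * (k + 1) + 1 := by ring
        rw [h, chain_odd]
      have prod1 : chainSeq P Q (2 * k + 1) * chainSeq P Q (2 * k + 1 + 1) = P * Q := by
        rw [e1, e2]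
        simp only [pow_succ ((P*Q)⁻¹) k, pow_succ' (P*Q) k, inv_pow]
        group
      have prod2 : chainSeq P Q (2 * k + 1 + 1) * chainSeq P Q (2 * k + 1) = Q * P := by
        rw [e1, e2]
        have h : ((P*Q)⁻¹) ^ (k+1) * P * (P*Q) ^ (k+1) * (((P*Q)⁻¹) ^ k * Q * (P*Q) ^ k)
            = ((P*Q)⁻¹) ^ (k+1) * (P * (P*Q) * Q) * (P*Q) ^ k := by simp only [inv_pow, pow_succ']; group
        rw [h, hPAQ]
        have h' : ((P*Q)⁻¹) ^ (k+1) * ((P*Q) * (Q*P)) * (P*Q) ^ k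
            = ((P*Q)⁻¹) ^ k * (Q * P) * (P*Q) ^ k := by simp only [inv_pow, pow_succ]; group
        rw [h', conj_pow_eq cQP k]
      refine ⟨by rw [prod1, prod2], ?_, ?_, ?_, ?_⟩
      · intro h
        rw [e1, e2] at h
        have key : ((P*Q)⁻¹) ^ (k+1) * P * (P*Q) ^ (k+1)
            = ((P*Q)⁻¹) ^ k * ((P*Q)⁻¹ * P * (P*Q)) * (P*Q) ^ k := by
          simp only [pow_succ ((P*Q)⁻¹) k, pow_succ' (P*Q) k, mul_assoc]
        have h' : Q = (P*Q)⁻¹ * P * (P*Q) := cancel_mid (h.trans key)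
        have h'' : (P*Q) * Q = P * (P*Q) := by
          calc (P*Q) * Q = (P*Q) * ((P*Q)⁻¹ * P * (P*Q)) := by rw [← h']
            _ = P * (P*Q) := by group
        have ha : P * (Q * Q) = P * (P * Q) := by
          rw [← mul_assoc]; exact h''
        have hb : Q * Q = P * Q := mul_left_cancel ha
        exact hPQ (mul_right_cancel hb).symm
      · intro h
        rw [e1, e3] at h
        have key : ((P*Q)⁻¹) ^ (k+1) * Q * (P*Q) ^ (k+1)
            = ((P*Q)⁻¹) ^ k * ((P*Q)⁻¹ * Q * (P*Q)) * (P*Q) ^ k := by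
          simp only [pow_succ ((P*Q)⁻¹) k, pow_succ' (P*Q) k, mul_assoc]
        have h' : Q = (P*Q)⁻¹ * Q * (P*Q) := cancel_mid (h.trans key)
        have h'' : (P*Q) * Q = Q * (P*Q) := by
          calc (P*Q) * Q = (P*Q) * ((P*Q)⁻¹ * Q * (P*Q)) := by rw [← h']
            _ = Q * (P*Q) := by group
        have ha : (P*Q) * Q = (Q*P) * Q := h''.trans (by rw [mul_assoc])
        exact h1 (mul_right_cancel ha)
      · intro heven
        exact absurd heven (by simp [Nat.even_iff])
      · intro _
        rw [e1]
        have h : (((P*Q)⁻¹) ^ k * Q * (P*Q) ^ k) ^ 2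
            = ((P*Q)⁻¹) ^ k * Q ^ 2 * (P*Q) ^ k := by simp only [inv_pow, pow_two]; group
        rw [h, conj_pow_eq cQ2 k]
  · intro p hp hP1
    by_contra hodd
    rw [Nat.not_even_iff_odd] at hodd
    obtain ⟨m, hm⟩ := hodd
    subst hm
    have hP1' : (P ^ 2) ^ m * P = 1 := by
      rw [← pow_mul, ← pow_succ]; exact hP1
    have hPval : P = ((P ^ 2) ^ m)⁻¹ := by
      have h := congrArg (fun x => ((P ^ 2) ^ m)⁻¹ * x) hP1'
      simpa [← mul_assoc] using h
    have c : Commute (P ^ 2) Q := h3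
    have c2 : Commute P Q := by
      rw [hPval]
      exact (c.pow_left m).inv_left
    exact h1 c2.eq
end
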